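/- Under the hypotheses of the local existence result, assume additionally that G is a k-set contraction in the sense β(G(Ω × [0,1])) ≤ k β(Ω) for all bounded Ω ⊂ U with k ∈ [0,1), and E is separable. Then the translation operator Φ_t(x,λ) := u(t; x, λ) satisfies β(Φ_t(Ω × [0,1])) ≤ e^{(k-1)t} β(Ω) for all t ∈ (0, t̄] and all Ω ⊆ cl V. -/

import Mathlib

/-!
Time is discretised. On a step `[s, T]` the variation of constants formula gives
`Φ_T(Ω × [0,1]) ⊆ e^{-(T-s)} Φ_s(Ω × [0,1]) + (T - s) D`, where `D` is the closed convex hull of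
`0` and `G(A × [0,1])`, `A` being the set of states visited during `[s, T]`. As `β` does not grow
under closures, convex hulls and adding a point, `β(D) ≤ k β(A)`, and `A` lies within `O(T - s)`
of `Φ_s(Ω × [0,1])`. Hence `β(Φ_T) ≤ (e^{-(T-s)} + k (T - s)) β(Φ_s) + O((T - s)²)`; iterating over
`n` equal steps of `[0, t]` gives `β(Φ_t) ≤ e^{(k-1)t + t²/n} β(Ω) + O(1/n)`, and `n → ∞` concludes.
-/

open Bornology Set

/-- Hausdorff measure of noncompactness. -/
noncomputable def hmnc {E : Type*} [NormedAddCommGroup E] (Ω : Set E) : ℝ :=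
  sInf {r : ℝ | 0 < r ∧ ∃ S : Finset E, Ω ⊆ ⋃ x ∈ S, Metric.ball x r}

/-- `u` is a solution on `[0, tb]` of `u' = -u + G(u, l)`, `u 0 = x`, staying in `U`,
in the integral (variation of constants) form. -/
def IsSolG {E : Type*} [NormedAddCommGroup E] [NormedSpace ℝ E]
    (G : E → ℝ → E) (U : Set E) (tb : ℝ) (x : E) (l : ℝ) (u : ℝ → E) : Prop :=
  ContinuousOn u (Set.Icc 0 tb) ∧ (∀ t ∈ Set.Icc 0 tb, u t ∈ U) ∧
  ∀ t ∈ Set.Icc 0 tb,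
    u t = Real.exp (-t) • x + ∫ τ in (0:ℝ)..t, Real.exp (-t + τ) • G (u τ) l

open Metric Pointwise Real Filter Topology MeasureTheory

lemma le_pow_mul_add_of_le_mul_add {x : ℕ → ℝ} {q Q d : ℝ} (hq : 0 ≤ q) (hqQ : q ≤ Q)
    (hQ : 1 ≤ Q) (hd : 0 ≤ d) :
    ∀ n : ℕ, (∀ i < n, x (i + 1) ≤ q * x i + d) → x n ≤ q ^ n * x 0 + n * d * Q ^ n
  | 0, _ => by simp
  | n + 1, h => by
    have ih := le_pow_mul_add_of_le_mul_add hq hqQ hQ hd n fun i hi ↦ h i (by omega)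
    have hQn : q * Q ^ n ≤ Q ^ (n + 1) := by
      rw [pow_succ']; exact mul_le_mul_of_nonneg_right hqQ (by positivity)
    have hQ1 : 1 ≤ Q ^ (n + 1) := one_le_pow₀ hQ
    calc x (n + 1) ≤ q * x n + d := h n n.lt_succ_self
      _ ≤ q * (q ^ n * x 0 + n * d * Q ^ n) + d := by gcongr
      _ = q ^ (n + 1) * x 0 + n * d * (q * Q ^ n) + d := by ring
      _ ≤ q ^ (n + 1) * x 0 + n * d * Q ^ (n + 1) + d * Q ^ (n + 1) := by
        gcongr; exact le_mul_of_one_le_right hd hQ1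
      _ = q ^ (n + 1) * x 0 + ↑(n + 1) * d * Q ^ (n + 1) := by push_cast; ring

lemma exp_neg_add_mul_le {h : ℝ} (hh : 0 ≤ h) (k : ℝ) :
    exp (-h) + k * h ≤ exp ((k - 1) * h + h ^ 2) := by
  have hinv : exp (-h) ≤ (1 + h)⁻¹ := by
    rw [exp_neg]; gcongr; linarith [add_one_le_exp h]
  have hquad : (1 + h)⁻¹ ≤ 1 - h + h ^ 2 := by
    rw [inv_le_iff_one_le_mul₀ (by positivity)]; nlinarith [pow_nonneg hh 3]
  linarith [add_one_le_exp ((k - 1) * h + h ^ 2)]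

lemma le_exp_mul_add_div_of_forall_le {f : ℝ → ℝ} {k c t : ℝ} (hk : 0 ≤ k) (hc : 0 ≤ c)
    (ht : 0 < t) (hf0 : 0 ≤ f 0)
    (hstep : ∀ s T, 0 ≤ s → s < T → T ≤ t →
      f T ≤ (exp (-(T - s)) + k * (T - s)) * f s + c * (T - s) ^ 2)
    {n : ℕ} (hn : 1 ≤ n) :
    f t ≤ exp ((k - 1) * t + t ^ 2 / n) * f 0 + c * t ^ 2 * exp (k * t) / n := by
  have hn0 : (0 : ℝ) < n := by exact_mod_cast hn
  set h := t / n with hh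
  have hh0 : 0 < h := div_pos ht hn0
  have hnh : n * h = t := by rw [hh]; field_simp
  have hiter := le_pow_mul_add_of_le_mul_add (x := fun i : ℕ ↦ f (i * h))
    (q := exp (-h) + k * h) (Q := 1 + k * h) (d := c * h ^ 2) (by positivity)
    (by linarith [exp_le_one_iff.2 (neg_nonpos.2 hh0.le)]) (by nlinarith) (by positivity) n
    (fun i hi ↦ by
      have hin : (i : ℝ) + 1 ≤ n := by exact_mod_cast hi
      have := hstep (i * h) ((i + 1) * h) (by positivity) (by nlinarith) (by nlinarith)
      simpa [show ((i : ℝ) + 1) * h - i * h = h by ring] using this)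
  have hq : (exp (-h) + k * h) ^ n ≤ exp ((k - 1) * t + t ^ 2 / n) :=
    calc (exp (-h) + k * h) ^ n ≤ exp ((k - 1) * h + h ^ 2) ^ n := by
          gcongr
          exact exp_neg_add_mul_le hh0.le k
      _ = exp ((k - 1) * t + t ^ 2 / n) := by
        rw [← exp_nat_mul, ← hnh, hh]; congr 1; field_simp
  have hQ : (1 + k * h) ^ n ≤ exp (k * t) :=
    calc (1 + k * h) ^ n ≤ exp (k * h) ^ n := by
          gcongr
          linarith [add_one_le_exp (k * h)]
      _ = exp (k * t) := by rw [← exp_nat_mul, ← hnh]; ring_nf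
  calc f t = f (n * h) := by rw [hnh]
    _ ≤ (exp (-h) + k * h) ^ n * f 0 + n * (c * h ^ 2) * (1 + k * h) ^ n := by
      simpa using hiter
    _ ≤ exp ((k - 1) * t + t ^ 2 / n) * f 0 + n * (c * h ^ 2) * exp (k * t) := by gcongr
    _ = exp ((k - 1) * t + t ^ 2 / n) * f 0 + c * t ^ 2 * exp (k * t) / n := by
      rw [hh]; field_simp

lemma le_exp_mul_of_forall_le {f : ℝ → ℝ} {k c t : ℝ} (hk : 0 ≤ k) (hc : 0 ≤ c) (ht : 0 < t)
    (hf0 : 0 ≤ f 0)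
    (hstep : ∀ s T, 0 ≤ s → s < T → T ≤ t →
      f T ≤ (exp (-(T - s)) + k * (T - s)) * f s + c * (T - s) ^ 2) :
    f t ≤ exp ((k - 1) * t) * f 0 := by
  have hlim : Tendsto (fun n : ℕ ↦
      exp ((k - 1) * t + t ^ 2 / n) * f 0 + c * t ^ 2 * exp (k * t) / n) atTop
      (𝓝 (exp ((k - 1) * t + 0) * f 0 + 0)) :=
    (((continuous_exp.tendsto _).comp (tendsto_const_nhds.add
      (tendsto_const_div_atTop_nhds_zero_nat _))).mul_const _).add
      (tendsto_const_div_atTop_nhds_zero_nat _)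
  simpa using ge_of_tendsto hlim (eventually_atTop.2
    ⟨1, fun n hn ↦ le_exp_mul_add_div_of_forall_le hk hc ht hf0 hstep hn⟩)

section MeasureOfNoncompactness

variable {E : Type*} [NormedAddCommGroup E]

lemma hmnc_nonneg (Ω : Set E) : 0 ≤ hmnc Ω :=
  Real.sInf_nonneg fun _ hr ↦ hr.1.le

lemma hmnc_le_of_forall_cover {Ω : Set E} {c : ℝ} (hc : 0 ≤ c)
    (h : ∀ ε > 0, ∃ S : Finset E, Ω ⊆ ⋃ x ∈ S, ball x (c + ε)) : hmnc Ω ≤ c := by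
  refine le_of_forall_pos_le_add fun ε hε ↦ ?_
  obtain ⟨S, hS⟩ := h ε hε
  exact csInf_le ⟨0, fun _ hr ↦ hr.1.le⟩ ⟨by linarith, S, hS⟩

lemma exists_cover_of_hmnc_lt {Ω : Set E} (hΩ : IsBounded Ω) {r : ℝ} (hr : hmnc Ω < r) :
    ∃ S : Finset E, Ω ⊆ ⋃ x ∈ S, ball x r := by
  obtain ⟨R, hR⟩ := (isBounded_iff_subset_ball (0 : E)).1 hΩ
  have hne : {r : ℝ | 0 < r ∧ ∃ S : Finset E, Ω ⊆ ⋃ x ∈ S, ball x r}.Nonempty :=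
    ⟨max R 1, by positivity, {0}, by simpa using hR.trans (ball_subset_ball (le_max_left _ _))⟩
  obtain ⟨r', ⟨-, S, hS⟩, hr'⟩ := exists_lt_of_csInf_lt hne hr
  exact ⟨S, hS.trans (iUnion₂_mono fun x _ ↦ ball_subset_ball hr'.le)⟩

lemma hmnc_mono {A B : Set E} (h : A ⊆ B) (hB : IsBounded B) : hmnc A ≤ hmnc B :=
  hmnc_le_of_forall_cover (hmnc_nonneg B) fun _ hε ↦
    (exists_cover_of_hmnc_lt hB (lt_add_of_pos_right _ hε)).imp fun _ hS ↦ h.trans hS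

lemma hmnc_closedBall_le (x : E) {r : ℝ} (hr : 0 ≤ r) : hmnc (closedBall x r) ≤ r :=
  hmnc_le_of_forall_cover hr fun ε hε ↦
    ⟨{x}, by simpa using closedBall_subset_ball (lt_add_of_pos_right r hε)⟩

lemma hmnc_insert_le (a : E) {A : Set E} (hA : IsBounded A) : hmnc (insert a A) ≤ hmnc A := by
  classical
  refine hmnc_le_of_forall_cover (hmnc_nonneg A) fun ε hε ↦ ?_
  obtain ⟨S, hS⟩ := exists_cover_of_hmnc_lt hA (lt_add_of_pos_right _ hε)
  refine ⟨insert a S, insert_subset ?_ (hS.trans ?_)⟩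
  · exact mem_biUnion (Finset.mem_insert_self a S)
      (mem_ball_self (by linarith [hmnc_nonneg A]))
  · exact biUnion_mono (fun x hx ↦ Finset.mem_insert_of_mem hx) fun _ _ ↦ subset_rfl

lemma hmnc_add_le {A B : Set E} (hA : IsBounded A) (hB : IsBounded B) :
    hmnc (A + B) ≤ hmnc A + hmnc B := by
  classical
  refine hmnc_le_of_forall_cover (add_nonneg (hmnc_nonneg A) (hmnc_nonneg B)) fun ε hε ↦ ?_
  obtain ⟨S, hS⟩ := exists_cover_of_hmnc_lt hA (lt_add_of_pos_right (hmnc A) (half_pos hε))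
  obtain ⟨T, hT⟩ := exists_cover_of_hmnc_lt hB (lt_add_of_pos_right (hmnc B) (half_pos hε))
  refine ⟨S + T, ?_⟩
  rintro _ ⟨x, hx, y, hy, rfl⟩
  obtain ⟨p, hpS, hp⟩ := mem_iUnion₂.1 (hS hx)
  obtain ⟨q, hqT, hq⟩ := mem_iUnion₂.1 (hT hy)
  refine mem_biUnion (Finset.add_mem_add hpS hqT) ?_
  rw [mem_ball] at *
  linarith [dist_add_add_le x y p q]

lemma hmnc_closure_le {A : Set E} (hA : IsBounded A) : hmnc (closure A) ≤ hmnc A := by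
  refine hmnc_le_of_forall_cover (hmnc_nonneg A) fun ε hε ↦ ?_
  obtain ⟨S, hS⟩ := exists_cover_of_hmnc_lt hA (lt_add_of_pos_right (hmnc A) (half_pos hε))
  refine ⟨S, (closure_mono hS).trans ?_⟩
  rw [Finset.closure_biUnion]
  exact iUnion₂_mono fun x _ ↦ closure_ball_subset_closedBall.trans
    (closedBall_subset_ball (by linarith))

variable [NormedSpace ℝ E]

lemma hmnc_smul_le {A : Set E} (hA : IsBounded A) {c : ℝ} (hc : 0 < c) :
    hmnc (c • A) ≤ c * hmnc A := by
  classical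
  refine hmnc_le_of_forall_cover (mul_nonneg hc.le (hmnc_nonneg A)) fun ε hε ↦ ?_
  obtain ⟨S, hS⟩ := exists_cover_of_hmnc_lt hA (lt_add_of_pos_right (hmnc A) (div_pos hε hc))
  refine ⟨S.image (c • ·), ?_⟩
  rintro _ ⟨x, hx, rfl⟩
  obtain ⟨p, hpS, hp⟩ := mem_iUnion₂.1 (hS hx)
  refine mem_biUnion (Finset.mem_image_of_mem _ hpS) ?_
  rw [mem_ball, dist_smul₀, Real.norm_of_nonneg hc.le]
  calc c * dist x p < c * (hmnc A + ε / c) := mul_lt_mul_of_pos_left hp hc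
    _ = c * hmnc A + ε := by field_simp

/-- The convex hull of a finite `δ`-net `S` of `A` is compact, and
`convexHull ℝ A ⊆ convexHull ℝ S + ball 0 δ`. -/
lemma hmnc_convexHull_le {A : Set E} (hA : IsBounded A) :
    hmnc (convexHull ℝ A) ≤ hmnc A := by
  refine hmnc_le_of_forall_cover (hmnc_nonneg A) fun ε hε ↦ ?_
  set δ := hmnc A + ε / 2
  obtain ⟨S, hS⟩ := exists_cover_of_hmnc_lt hA (lt_add_of_pos_right (hmnc A) (half_pos hε))
  have hA_sub : A ⊆ convexHull ℝ (S : Set E) + ball 0 δ := by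
    intro x hx
    obtain ⟨p, hpS, hp⟩ := mem_iUnion₂.1 (hS hx)
    exact ⟨p, subset_convexHull ℝ _ hpS, x - p, by rwa [mem_ball_zero_iff, ← dist_eq_norm],
      add_sub_cancel p x⟩
  have hhull_sub : convexHull ℝ A ⊆ convexHull ℝ (S : Set E) + ball 0 δ :=
    convexHull_min hA_sub ((convex_convexHull ℝ _).add (convex_ball 0 δ))
  obtain ⟨T, hTfin, hT⟩ := totallyBounded_iff.1
    (S.finite_toSet.isCompact_convexHull ℝ).totallyBounded (ε / 2) (half_pos hε)
  refine ⟨hTfin.toFinset, hhull_sub.trans ?_⟩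
  rintro _ ⟨u, hu, v, hv, rfl⟩
  obtain ⟨y, hyT, hy⟩ := mem_iUnion₂.1 (hT hu)
  refine mem_biUnion (hTfin.mem_toFinset.2 hyT) ?_
  rw [mem_ball] at hy ⊢
  rw [mem_ball_zero_iff] at hv
  calc dist (u + v) y ≤ dist u y + ‖v‖ := by
        rw [dist_eq_norm, dist_eq_norm, add_sub_right_comm]; exact norm_add_le _ _
    _ < ε / 2 + δ := add_lt_add hy hv
    _ = hmnc A + ε := by ring

end MeasureOfNoncompactness

lemma intervalIntegral_mem_smul_of_forall_mem {E : Type*} [NormedAddCommGroup E]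
    [NormedSpace ℝ E] [CompleteSpace E] {f : ℝ → E} {D : Set E} {a b : ℝ}
    (hD : Convex ℝ D) (hDc : IsClosed D) (hab : a < b) (hf : ∀ τ ∈ Ioc a b, f τ ∈ D)
    (hfi : IntervalIntegrable f volume a b) :
    ∫ τ in a..b, f τ ∈ (b - a) • D := by
  have havg : ⨍ τ in Ioc a b, f τ ∈ D :=
    hD.set_average_mem hDc (by simp [hab]) (by simp)
      (ae_restrict_of_forall_mem measurableSet_Ioc hf) hfi.1
  have hint : ∫ τ in a..b, f τ = (b - a) • ⨍ τ in Ioc a b, f τ := by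
    rw [setAverage_eq, intervalIntegral.integral_of_le hab.le, smul_smul,
      Real.volume_real_Ioc_of_le hab.le, mul_inv_cancel₀ (sub_ne_zero.2 hab.ne'), one_smul]
  rw [hint]
  exact smul_mem_smul_set havg

namespace IsSolG

variable {E : Type*} [NormedAddCommGroup E] [NormedSpace ℝ E] {G : E → ℝ → E} {U : Set E}
  {tb : ℝ} {x : E} {l : ℝ} {u : ℝ → E}

lemma intervalIntegrable_integrand (hGc : Continuous fun p : E × ℝ ↦ G p.1 p.2)
    (hu : IsSolG G U tb x l u) (T : ℝ) {a b : ℝ} (ha : a ∈ Icc 0 tb) (hb : b ∈ Icc 0 tb) :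
    IntervalIntegrable (fun τ ↦ exp (-T + τ) • G (u τ) l) volume a b := by
  have hcont : ContinuousOn (fun τ ↦ exp (-T + τ) • G (u τ) l) (Icc 0 tb) :=
    (continuous_exp.comp (continuous_const_add _)).continuousOn.smul
      (hGc.comp_continuousOn (hu.1.prodMk continuousOn_const))
  exact (hcont.mono (uIcc_subset_Icc ha hb)).intervalIntegrable

lemma eq_exp_smul_add_integral (hGc : Continuous fun p : E × ℝ ↦ G p.1 p.2)
    (hu : IsSolG G U tb x l u) {s T : ℝ} (h0s : 0 ≤ s) (hsT : s ≤ T) (hT : T ≤ tb) :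
    u T = exp (-(T - s)) • u s + ∫ τ in s..T, exp (-T + τ) • G (u τ) l := by
  have hs : s ∈ Icc 0 tb := ⟨h0s, hsT.trans hT⟩
  have hT' : T ∈ Icc 0 tb := ⟨h0s.trans hsT, hT⟩
  have h0 : (0 : ℝ) ∈ Icc 0 tb := ⟨le_rfl, hs.2.trans' h0s⟩
  have hscale : ∫ τ in (0 : ℝ)..s, exp (-T + τ) • G (u τ) l =
      exp (-(T - s)) • ∫ τ in (0 : ℝ)..s, exp (-s + τ) • G (u τ) l := by
    rw [← intervalIntegral.integral_smul]
    congr 1 with τ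
    rw [smul_smul, ← exp_add]
    ring_nf
  rw [hu.2.2 T hT', hu.2.2 s hs, smul_add, smul_smul, ← exp_add, ← hscale, add_assoc,
    intervalIntegral.integral_add_adjacent_intervals
      (hu.intervalIntegrable_integrand hGc T h0 hs) (hu.intervalIntegrable_integrand hGc T hs hT')]
  ring_nf

lemma norm_sub_le (hGc : Continuous fun p : E × ℝ ↦ G p.1 p.2) (hu : IsSolG G U tb x l u)
    {R M : ℝ} (hR : ∀ y ∈ U, ‖y‖ ≤ R) (hM : ∀ y ∈ U, ‖G y l‖ ≤ M)
    {s T : ℝ} (h0s : 0 ≤ s) (hsT : s ≤ T) (hT : T ≤ tb) :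
    ‖u T - u s‖ ≤ (R + M) * (T - s) := by
  have hexp : |exp (-(T - s)) - 1| ≤ T - s := by
    rw [abs_le]
    constructor
    · linarith [one_sub_le_exp_neg (T - s)]
    · linarith [exp_le_one_iff.2 (neg_nonpos.2 (sub_nonneg.2 hsT))]
  have hint : ‖∫ τ in s..T, exp (-T + τ) • G (u τ) l‖ ≤ M * (T - s) := by
    refine (intervalIntegral.norm_integral_le_of_norm_le_const fun τ hτ ↦ ?_).trans_eq
      (by rw [abs_of_nonneg (sub_nonneg.2 hsT)])
    rw [uIoc_of_le hsT] at hτ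
    rw [norm_smul, Real.norm_of_nonneg (exp_pos _).le]
    exact (mul_le_of_le_one_left (norm_nonneg _) (exp_le_one_iff.2 (by linarith [hτ.2]))).trans
      (hM _ (hu.2.1 τ ⟨h0s.trans hτ.1.le, hτ.2.trans hT⟩))
  calc ‖u T - u s‖
      = ‖(exp (-(T - s)) - 1) • u s + ∫ τ in s..T, exp (-T + τ) • G (u τ) l‖ := by
        rw [hu.eq_exp_smul_add_integral hGc h0s hsT hT, sub_smul, one_smul]; abel_nf
    _ ≤ |exp (-(T - s)) - 1| * ‖u s‖ + M * (T - s) := by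
        rw [← Real.norm_eq_abs, ← norm_smul]; exact norm_add_le_of_le le_rfl hint
    _ ≤ (T - s) * R + M * (T - s) := by
        gcongr; exact hR _ (hu.2.1 s ⟨h0s, hsT.trans hT⟩)
    _ = (R + M) * (T - s) := by ring

end IsSolG

section TranslationOperator

variable {E : Type*} [NormedAddCommGroup E] [NormedSpace ℝ E]

/-- `F(Ω × [0,1])`, written with `y = F x l` so that it is definitionally the set in the
statement (`Set.image2` uses `F x l = y`). -/
def imageProdUnit (F : E → ℝ → E) (Ω : Set E) : Set E :=
  {y | ∃ x ∈ Ω, ∃ l ∈ Icc (0 : ℝ) 1, y = F x l}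

variable {G : E → ℝ → E} {U Ω : Set E} {tb : ℝ} {sol : E → ℝ → ℝ → E} {R M k s T : ℝ}

lemma imageProdUnit_sol_subset (hsol : ∀ x ∈ Ω, ∀ l ∈ Icc (0 : ℝ) 1, IsSolG G U tb x l (sol x l))
    (hs : s ∈ Icc 0 tb) : imageProdUnit (sol · · s) Ω ⊆ U := by
  rintro _ ⟨x, hx, l, hl, rfl⟩
  exact (hsol x hx l hl).2.1 s hs

lemma imageProdUnit_sol_zero (hsol : ∀ x ∈ Ω, ∀ l ∈ Icc (0 : ℝ) 1, IsSolG G U tb x l (sol x l))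
    (htb : 0 ≤ tb) : imageProdUnit (sol · · 0) Ω = Ω := by
  have hsol0 : ∀ x ∈ Ω, ∀ l ∈ Icc (0 : ℝ) 1, sol x l 0 = x := fun x hx l hl ↦ by
    simpa using (hsol x hx l hl).2.2 0 ⟨le_rfl, htb⟩
  ext y
  constructor
  · rintro ⟨x, hx, l, hl, rfl⟩
    dsimp only
    rwa [hsol0 x hx l hl]
  · exact fun hy ↦ ⟨y, hy, 0, left_mem_Icc.2 zero_le_one, (hsol0 y hy 0 ⟨le_rfl, zero_le_one⟩).symm⟩

lemma hmnc_biUnion_imageProdUnit_sol_le (hGc : Continuous fun p : E × ℝ ↦ G p.1 p.2)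
    (hsol : ∀ x ∈ Ω, ∀ l ∈ Icc (0 : ℝ) 1, IsSolG G U tb x l (sol x l))
    (hR : ∀ y ∈ U, ‖y‖ ≤ R) (hM : ∀ y ∈ U, ∀ l ∈ Icc (0 : ℝ) 1, ‖G y l‖ ≤ M) (hRM : 0 ≤ R + M)
    (h0s : 0 ≤ s) (hsT : s ≤ T) (hT : T ≤ tb) :
    hmnc (⋃ τ ∈ Icc s T, imageProdUnit (sol · · τ) Ω) ≤
      hmnc (imageProdUnit (sol · · s) Ω) + (R + M) * (T - s) := by
  have hΦs : IsBounded (imageProdUnit (sol · · s) Ω) :=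
    (isBounded_iff_forall_norm_le.2 ⟨R, hR⟩).subset
      (imageProdUnit_sol_subset hsol ⟨h0s, hsT.trans hT⟩)
  have hsub : ⋃ τ ∈ Icc s T, imageProdUnit (sol · · τ) Ω ⊆
      imageProdUnit (sol · · s) Ω + closedBall 0 ((R + M) * (T - s)) := by
    refine iUnion₂_subset fun τ hτ ↦ ?_
    rintro _ ⟨x, hx, l, hl, rfl⟩
    refine ⟨sol x l s, ⟨x, hx, l, hl, rfl⟩, sol x l τ - sol x l s, ?_, add_sub_cancel _ _⟩
    rw [mem_closedBall_zero_iff]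
    exact ((hsol x hx l hl).norm_sub_le hGc hR (fun y hy ↦ hM y hy l hl) h0s hτ.1
      (hτ.2.trans hT)).trans (mul_le_mul_of_nonneg_left (by linarith [hτ.2]) hRM)
  have hball := hmnc_closedBall_le (0 : E) (mul_nonneg hRM (sub_nonneg.2 hsT))
  calc _ ≤ hmnc (imageProdUnit (sol · · s) Ω + closedBall 0 ((R + M) * (T - s))) :=
        hmnc_mono hsub (hΦs.add isBounded_closedBall)
    _ ≤ hmnc (imageProdUnit (sol · · s) Ω) + hmnc (closedBall (0 : E) ((R + M) * (T - s))) :=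
        hmnc_add_le hΦs isBounded_closedBall
    _ ≤ hmnc (imageProdUnit (sol · · s) Ω) + (R + M) * (T - s) := by linarith

variable [CompleteSpace E]

/-- As `exp (-T + τ) ∈ (0, 1]`, each integrand lies on a segment from `0` to a point of
`G(A × [0,1])`, where `A` collects the states visited during `[s, T]`. -/
lemma imageProdUnit_sol_subset_smul_add (hGc : Continuous fun p : E × ℝ ↦ G p.1 p.2)
    (hsol : ∀ x ∈ Ω, ∀ l ∈ Icc (0 : ℝ) 1, IsSolG G U tb x l (sol x l))
    (h0s : 0 ≤ s) (hsT : s < T) (hT : T ≤ tb) :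
    imageProdUnit (sol · · T) Ω ⊆ exp (-(T - s)) • imageProdUnit (sol · · s) Ω +
      (T - s) • closure (convexHull ℝ
        (insert 0 (imageProdUnit G (⋃ τ ∈ Icc s T, imageProdUnit (sol · · τ) Ω)))) := by
  rintro _ ⟨x, hx, l, hl, rfl⟩
  have hu := hsol x hx l hl
  refine ⟨_, smul_mem_smul_set ⟨x, hx, l, hl, rfl⟩, _, ?_,
    (hu.eq_exp_smul_add_integral hGc h0s hsT.le hT).symm⟩
  refine intervalIntegral_mem_smul_of_forall_mem (convex_convexHull ℝ _).closure isClosed_closure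
    hsT (fun τ hτ ↦ subset_closure ?_)
    (hu.intervalIntegrable_integrand hGc T ⟨h0s, hsT.le.trans hT⟩ ⟨h0s.trans hsT.le, hT⟩)
  refine (convex_convexHull ℝ _).smul_mem_of_zero_mem (subset_convexHull ℝ _ (mem_insert _ _))
    (subset_convexHull ℝ _ (mem_insert_of_mem _ ?_))
    ⟨(exp_pos _).le, exp_le_one_iff.2 (by linarith [hτ.2])⟩
  exact ⟨sol x l τ, mem_biUnion (Ioc_subset_Icc_self hτ) ⟨x, hx, l, hl, rfl⟩, l, hl, rfl⟩

lemma hmnc_imageProdUnit_sol_le (hGc : Continuous fun p : E × ℝ ↦ G p.1 p.2)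
    (hsol : ∀ x ∈ Ω, ∀ l ∈ Icc (0 : ℝ) 1, IsSolG G U tb x l (sol x l))
    (hR : ∀ y ∈ U, ‖y‖ ≤ R) (hM : ∀ y ∈ U, ∀ l ∈ Icc (0 : ℝ) 1, ‖G y l‖ ≤ M) (hRM : 0 ≤ R + M)
    (hk : 0 ≤ k) (hGk : ∀ A ⊆ U, IsBounded A → hmnc (imageProdUnit G A) ≤ k * hmnc A)
    (h0s : 0 ≤ s) (hsT : s < T) (hT : T ≤ tb) :
    hmnc (imageProdUnit (sol · · T) Ω) ≤
      (exp (-(T - s)) + k * (T - s)) * hmnc (imageProdUnit (sol · · s) Ω) +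
        k * (R + M) * (T - s) ^ 2 := by
  set Φs := imageProdUnit (sol · · s) Ω
  set A := ⋃ τ ∈ Icc s T, imageProdUnit (sol · · τ) Ω
  set D := closure (convexHull ℝ (insert 0 (imageProdUnit G A)))
  have hUb : IsBounded U := isBounded_iff_forall_norm_le.2 ⟨R, hR⟩
  have hAU : A ⊆ U := iUnion₂_subset fun τ hτ ↦
    imageProdUnit_sol_subset hsol ⟨h0s.trans hτ.1, hτ.2.trans hT⟩
  have hGA : IsBounded (imageProdUnit G A) := isBounded_iff_forall_norm_le.2
    ⟨M, by rintro _ ⟨y, hy, l, hl, rfl⟩; exact hM y (hAU hy) l hl⟩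
  have hΦs : IsBounded Φs := hUb.subset (imageProdUnit_sol_subset hsol ⟨h0s, hsT.le.trans hT⟩)
  have hD : IsBounded D := (isBounded_convexHull.2 (hGA.insert 0)).closure
  have hmncD : hmnc D ≤ k * (hmnc Φs + (R + M) * (T - s)) :=
    calc hmnc D ≤ hmnc (convexHull ℝ (insert 0 (imageProdUnit G A))) :=
          hmnc_closure_le (isBounded_convexHull.2 (hGA.insert 0))
      _ ≤ hmnc (insert 0 (imageProdUnit G A)) := hmnc_convexHull_le (hGA.insert 0)
      _ ≤ hmnc (imageProdUnit G A) := hmnc_insert_le 0 hGA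
      _ ≤ k * hmnc A := hGk A hAU (hUb.subset hAU)
      _ ≤ k * (hmnc Φs + (R + M) * (T - s)) := mul_le_mul_of_nonneg_left
          (hmnc_biUnion_imageProdUnit_sol_le hGc hsol hR hM hRM h0s hsT.le hT) hk
  calc hmnc (imageProdUnit (sol · · T) Ω) ≤ hmnc (exp (-(T - s)) • Φs + (T - s) • D) :=
        hmnc_mono (imageProdUnit_sol_subset_smul_add hGc hsol h0s hsT hT)
          ((hΦs.smul₀ _).add (hD.smul₀ _))
    _ ≤ exp (-(T - s)) * hmnc Φs + (T - s) * hmnc D :=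
        (hmnc_add_le (hΦs.smul₀ _) (hD.smul₀ _)).trans
          (add_le_add (hmnc_smul_le hΦs (exp_pos _)) (hmnc_smul_le hD (sub_pos.2 hsT)))
    _ ≤ exp (-(T - s)) * hmnc Φs + (T - s) * (k * (hmnc Φs + (R + M) * (T - s))) := by
        gcongr
    _ = (exp (-(T - s)) + k * (T - s)) * hmnc Φs + k * (R + M) * (T - s) ^ 2 := by ring

end TranslationOperator

theorem stmt9_general {E : Type*} [NormedAddCommGroup E] [NormedSpace ℝ E] [CompleteSpace E]
    (U V : Set E) (hUb : IsBounded U)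
    (G : E → ℝ → E)
    (hGc : Continuous fun p : E × ℝ => G p.1 p.2)
    (hGb : IsBounded {y : E | ∃ x ∈ U, ∃ l ∈ Set.Icc (0:ℝ) 1, y = G x l})
    (k : ℝ) (hk0 : 0 ≤ k)
    (hGk : ∀ Ω ⊆ U, IsBounded Ω →
      hmnc {y : E | ∃ x ∈ Ω, ∃ l ∈ Set.Icc (0:ℝ) 1, y = G x l} ≤ k * hmnc Ω)
    (tb : ℝ) (sol : E → ℝ → ℝ → E)
    (hsol : ∀ x ∈ closure V, ∀ l ∈ Set.Icc (0:ℝ) 1, IsSolG G U tb x l (sol x l)) :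
    ∀ t ∈ Set.Ioc (0:ℝ) tb, ∀ Ω ⊆ closure V,
      hmnc {y : E | ∃ x ∈ Ω, ∃ l ∈ Set.Icc (0:ℝ) 1, y = sol x l t} ≤
        Real.exp ((k - 1) * t) * hmnc Ω := by
  intro t ht Ω hΩ
  obtain ⟨R, hR0, hR⟩ := hUb.exists_pos_norm_le
  obtain ⟨M, hM0, hM⟩ := hGb.exists_pos_norm_le
  have hsolΩ : ∀ x ∈ Ω, ∀ l ∈ Icc (0 : ℝ) 1, IsSolG G U tb x l (sol x l) :=
    fun x hx ↦ hsol x (hΩ hx)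
  have hGU : ∀ y ∈ U, ∀ l ∈ Icc (0 : ℝ) 1, ‖G y l‖ ≤ M :=
    fun y hy l hl ↦ hM _ ⟨y, hy, l, hl, rfl⟩
  have key := le_exp_mul_of_forall_le (f := fun s ↦ hmnc (imageProdUnit (sol · · s) Ω)) hk0
    (by positivity) ht.1 (hmnc_nonneg _) fun s T h0s hsT hTt ↦
      hmnc_imageProdUnit_sol_le hGc hsolΩ hR hGU (by positivity) hk0 hGk h0s hsT (hTt.trans ht.2)
  rwa [imageProdUnit_sol_zero hsolΩ (ht.1.le.trans ht.2)] at key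

theorem stmt9 {E : Type*} [NormedAddCommGroup E] [NormedSpace ℝ E] [CompleteSpace E]
    [TopologicalSpace.SeparableSpace E]
    (U V : Set E) (hU : IsOpen U) (hUb : IsBounded U) (hV : IsOpen V)
    (ρ : ℝ) (hρ : 0 < ρ)
    (hVU : ∀ x ∈ closure V, ∀ y : E, ‖y‖ < ρ → x + y ∈ U)
    (G : E → ℝ → E)
    (hGc : Continuous fun p : E × ℝ => G p.1 p.2)
    (hGl : ∀ x ∈ U, ∃ δ > (0:ℝ), ∃ L > (0:ℝ), ∀ x₁ ∈ Metric.ball x δ ∩ U,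
      ∀ x₂ ∈ Metric.ball x δ ∩ U, ∀ l ∈ Set.Icc (0:ℝ) 1,
        ‖G x₁ l - G x₂ l‖ ≤ L * ‖x₁ - x₂‖)
    (hGb : IsBounded {y : E | ∃ x ∈ U, ∃ l ∈ Set.Icc (0:ℝ) 1, y = G x l})
    (k : ℝ) (hk0 : 0 ≤ k) (hk1 : k < 1)
    (hGk : ∀ Ω ⊆ U, IsBounded Ω →
      hmnc {y : E | ∃ x ∈ Ω, ∃ l ∈ Set.Icc (0:ℝ) 1, y = G x l} ≤ k * hmnc Ω)
    (tb : ℝ) (htb : 0 < tb) (sol : E → ℝ → ℝ → E)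
    (hsol : ∀ x ∈ closure V, ∀ l ∈ Set.Icc (0:ℝ) 1, IsSolG G U tb x l (sol x l)) :
    ∀ t ∈ Set.Ioc (0:ℝ) tb, ∀ Ω ⊆ closure V,
      hmnc {y : E | ∃ x ∈ Ω, ∃ l ∈ Set.Icc (0:ℝ) 1, y = sol x l t} ≤
        Real.exp ((k - 1) * t) * hmnc Ω :=
  stmt9_general U V hUb G hGc hGb k hk0 hGk tb sol hsol
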